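/- Let G be a group, s : G → ℤ a homomorphism, and δ, γ ∈ G with s(δ) = n−1, s(γ) = n for an integer n ≥ 2, and δ^n = γ^{n−1}. Suppose α, β ∈ G are each conjugate to a power of δ or a power of γ, and s(α) = s(β). Then α and β are conjugate. -/

import Mathlib

/-! Conjugation preserves the exponent sum `s`, and `s(δ^a) = (n-1)a`, `s(γ^b) = nb`. So two
periodic elements over the same base have equal exponents, while `(n-1)a = nb` forces
`a = nq`, `b = (n-1)q` by coprimality, whence `δ^a = (δ^n)^q = (γ^(n-1))^q = γ^b`. -/

theorem zpow_eq_zpow_of_mul_eq_mul {G : Type*} [Group G] {δ γ : G} {p q a b : ℤ}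
    (h : δ ^ p = γ ^ q) (hpq : IsCoprime p q) (hp : p ≠ 0) (hab : a * q = b * p) :
    δ ^ a = γ ^ b := by
  obtain ⟨k, rfl⟩ : p ∣ a := hpq.dvd_of_dvd_mul_right ⟨b, by rw [hab, mul_comm]⟩
  have hb : b = q * k := mul_right_cancel₀ hp (by rw [← hab]; ring)
  rw [hb, zpow_mul, zpow_mul, h]

section ExponentSum

variable {G : Type*} [Group G] (s : G →* Multiplicative ℤ)

theorem toAdd_map_eq_of_isConj {x y : G} (h : IsConj x y) : (s x).toAdd = (s y).toAdd :=
  congrArg _ (isConj_iff_eq.mp (s.map_isConj h))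

theorem toAdd_map_zpow {x : G} {k : ℤ} (hx : s x = Multiplicative.ofAdd k) (a : ℤ) :
    (s (x ^ a)).toAdd = a * k := by
  rw [map_zpow, hx, toAdd_zpow, toAdd_ofAdd, smul_eq_mul]

theorem isConj_of_isConj_zpow_of_map_eq {x α β : G} {k a b : ℤ}
    (hx : s x = Multiplicative.ofAdd k) (hk : k ≠ 0)
    (hα : IsConj (x ^ a) α) (hβ : IsConj (x ^ b) β) (hs : s α = s β) : IsConj α β := by
  have hab : a * k = b * k := by
    rw [← toAdd_map_zpow s hx, ← toAdd_map_zpow s hx, toAdd_map_eq_of_isConj s hα,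
      toAdd_map_eq_of_isConj s hβ, hs]
  rw [mul_right_cancel₀ hk hab] at hα
  exact hα.symm.trans hβ

theorem isConj_of_isConj_zpow_of_zpow_eq_zpow {δ γ α β : G} {p q a b : ℤ}
    (hδ : s δ = Multiplicative.ofAdd q) (hγ : s γ = Multiplicative.ofAdd p)
    (hδγ : δ ^ p = γ ^ q) (hpq : IsCoprime p q) (hp : p ≠ 0)
    (hα : IsConj (δ ^ a) α) (hβ : IsConj (γ ^ b) β) (hs : s α = s β) : IsConj α β := by
  have hab : a * q = b * p := by
    rw [← toAdd_map_zpow s hδ, ← toAdd_map_zpow s hγ, toAdd_map_eq_of_isConj s hα,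
      toAdd_map_eq_of_isConj s hβ, hs]
  rw [zpow_eq_zpow_of_mul_eq_mul hδγ hpq hp hab] at hα
  exact hα.symm.trans hβ

end ExponentSum

theorem periodic_conj_of_eq_exponent_sum {G : Type*} [Group G]
    (s : G →* Multiplicative ℤ) (δ γ : G) (n : ℕ) (hn : 2 ≤ n)
    (hsδ : s δ = Multiplicative.ofAdd ((n : ℤ) - 1))
    (hsγ : s γ = Multiplicative.ofAdd (n : ℤ))
    (hδγ : δ ^ n = γ ^ (n - 1))
    (α β : G)
    (hα : ∃ a : ℤ, IsConj (δ ^ a) α ∨ IsConj (γ ^ a) α)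
    (hβ : ∃ b : ℤ, IsConj (δ ^ b) β ∨ IsConj (γ ^ b) β)
    (hs : s α = s β) : IsConj α β := by
  have hn0 : (n : ℤ) ≠ 0 := by omega
  have hn1 : (n : ℤ) - 1 ≠ 0 := by omega
  have hcop : IsCoprime (n : ℤ) ((n : ℤ) - 1) := ⟨1, -1, by ring⟩
  have hδγ' : δ ^ (n : ℤ) = γ ^ ((n : ℤ) - 1) := by
    rw [← Nat.cast_pred (by omega), zpow_natCast, zpow_natCast, hδγ]
  obtain ⟨a, hα | hα⟩ := hα <;> obtain ⟨b, hβ | hβ⟩ := hβ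
  · exact isConj_of_isConj_zpow_of_map_eq s hsδ hn1 hα hβ hs
  · exact isConj_of_isConj_zpow_of_zpow_eq_zpow s hsδ hsγ hδγ' hcop hn0 hα hβ hs
  · exact (isConj_of_isConj_zpow_of_zpow_eq_zpow s hsδ hsγ hδγ' hcop hn0 hβ hα hs.symm).symm
  · exact isConj_of_isConj_zpow_of_map_eq s hsγ hn0 hα hβ hs
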